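/- For the cycle C_n on n ≥ 3 vertices, L□_E(C_n)=2n+1. -/

import Mathlib

/-!
Every step of a pair of opposite lazy sweeps moves exactly one of the two walkers, and each walker
has to traverse all `n` edges of `C_n`: so there are at least `2n` steps, i.e. `2n + 1` positions.
Conversely, `f i = ⌈i/2⌉` and `g i = ⌊(n-1)/2⌋ + 1 + ⌊i/2⌋` move alternately, sweep `C_n` within
`2n + 1` positions and stay at distance at least `⌊(n-1)/2⌋`. This is the span `σ□_E(C_n)`: at a
step where only `f` moves, the displacement `g - f` changes by `±1`, and two neighbouring residues
cannot both be farther than `⌊(n-1)/2⌋` from `0`.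
-/

open SimpleGraph

/-- An `l`-track on `G`: a surjective function whose consecutive values are adjacent. -/
def IsTrack {V : Type*} (G : SimpleGraph V) {l : ℕ} (f : Fin l → V) : Prop :=
  Function.Surjective f ∧
    ∀ i : ℕ, ∀ hi : i + 1 < l, G.Adj (f ⟨i, Nat.lt_of_succ_lt hi⟩) (f ⟨i + 1, hi⟩)

/-- A lazy `l`-track on `G`: consecutive values are adjacent or equal. -/
def IsLazyTrack {V : Type*} (G : SimpleGraph V) {l : ℕ} (f : Fin l → V) : Prop :=
  Function.Surjective f ∧
    ∀ i : ℕ, ∀ hi : i + 1 < l,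
      G.Adj (f ⟨i, Nat.lt_of_succ_lt hi⟩) (f ⟨i + 1, hi⟩) ∨
        f ⟨i, Nat.lt_of_succ_lt hi⟩ = f ⟨i + 1, hi⟩

/-- The condition that every edge of `G` is traversed by `f`. -/
def SweepCond {V : Type*} (G : SimpleGraph V) {l : ℕ} (f : Fin l → V) : Prop :=
  ∀ e ∈ G.edgeSet, ∃ i : ℕ, ∃ hi : i + 1 < l,
    e = s(f ⟨i, Nat.lt_of_succ_lt hi⟩, f ⟨i + 1, hi⟩)

/-- An `l`-sweep on `G`: an `l`-track traversing every edge. -/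
def IsSweep {V : Type*} (G : SimpleGraph V) {l : ℕ} (f : Fin l → V) : Prop :=
  IsTrack G f ∧ SweepCond G f

/-- A lazy `l`-sweep on `G`: a lazy `l`-track traversing every edge. -/
def IsLazySweep {V : Type*} (G : SimpleGraph V) {l : ℕ} (f : Fin l → V) : Prop :=
  IsLazyTrack G f ∧ SweepCond G f

/-- `f` and `g` are opposite: at each step exactly `f` moves iff `g` stays. -/
def IsOpposite {V : Type*} (G : SimpleGraph V) {l : ℕ} (f g : Fin l → V) : Prop :=
  ∀ i : ℕ, ∀ hi : i + 1 < l,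
    (G.Adj (f ⟨i, Nat.lt_of_succ_lt hi⟩) (f ⟨i + 1, hi⟩) ↔
      g ⟨i, Nat.lt_of_succ_lt hi⟩ = g ⟨i + 1, hi⟩)

/-- The distance `m_G(f,g)`: minimal distance between simultaneous positions. -/
noncomputable def mDist {V : Type*} (G : SimpleGraph V) {l : ℕ} (f g : Fin l → V) : ℕ :=
  sInf {d | ∃ i : Fin l, G.dist (f i) (g i) = d}

/-- Strong vertex span `σ⊠_V(G)`. -/
noncomputable def strongVertexSpan {V : Type*} (G : SimpleGraph V) : ℕ :=
  sSup {d | ∃ (l : ℕ) (f g : Fin l → V), IsLazyTrack G f ∧ IsLazyTrack G g ∧ mDist G f g = d}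

/-- Direct vertex span `σ×_V(G)`. -/
noncomputable def directVertexSpan {V : Type*} (G : SimpleGraph V) : ℕ :=
  sSup {d | ∃ (l : ℕ) (f g : Fin l → V), IsTrack G f ∧ IsTrack G g ∧ mDist G f g = d}

/-- Cartesian vertex span `σ□_V(G)`. -/
noncomputable def cartesianVertexSpan {V : Type*} (G : SimpleGraph V) : ℕ :=
  sSup {d | ∃ (l : ℕ) (f g : Fin l → V),
    IsLazyTrack G f ∧ IsLazyTrack G g ∧ IsOpposite G f g ∧ mDist G f g = d}

/-- Strong edge span `σ⊠_E(G)`. -/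
noncomputable def strongEdgeSpan {V : Type*} (G : SimpleGraph V) : ℕ :=
  sSup {d | ∃ (l : ℕ) (f g : Fin l → V), IsLazySweep G f ∧ IsLazySweep G g ∧ mDist G f g = d}

/-- Direct edge span `σ×_E(G)`. -/
noncomputable def directEdgeSpan {V : Type*} (G : SimpleGraph V) : ℕ :=
  sSup {d | ∃ (l : ℕ) (f g : Fin l → V), IsSweep G f ∧ IsSweep G g ∧ mDist G f g = d}

/-- Cartesian edge span `σ□_E(G)`. -/
noncomputable def cartesianEdgeSpan {V : Type*} (G : SimpleGraph V) : ℕ :=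
  sSup {d | ∃ (l : ℕ) (f g : Fin l → V),
    IsLazySweep G f ∧ IsLazySweep G g ∧ IsOpposite G f g ∧ mDist G f g = d}

/-- `L⊠_V(G)`: minimal length of lazy tracks realizing the strong vertex span. -/
noncomputable def strongVertexL {V : Type*} (G : SimpleGraph V) : ℕ :=
  sInf {l | ∃ f g : Fin l → V,
    IsLazyTrack G f ∧ IsLazyTrack G g ∧ mDist G f g = strongVertexSpan G}

/-- `L×_V(G)`. -/
noncomputable def directVertexL {V : Type*} (G : SimpleGraph V) : ℕ :=
  sInf {l | ∃ f g : Fin l → V,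
    IsTrack G f ∧ IsTrack G g ∧ mDist G f g = directVertexSpan G}

/-- `L□_V(G)`. -/
noncomputable def cartesianVertexL {V : Type*} (G : SimpleGraph V) : ℕ :=
  sInf {l | ∃ f g : Fin l → V,
    IsLazyTrack G f ∧ IsLazyTrack G g ∧ IsOpposite G f g ∧ mDist G f g = cartesianVertexSpan G}

/-- `L⊠_E(G)`. -/
noncomputable def strongEdgeL {V : Type*} (G : SimpleGraph V) : ℕ :=
  sInf {l | ∃ f g : Fin l → V,
    IsLazySweep G f ∧ IsLazySweep G g ∧ mDist G f g = strongEdgeSpan G}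

/-- `L×_E(G)`. -/
noncomputable def directEdgeL {V : Type*} (G : SimpleGraph V) : ℕ :=
  sInf {l | ∃ f g : Fin l → V,
    IsSweep G f ∧ IsSweep G g ∧ mDist G f g = directEdgeSpan G}

/-- `L□_E(G)`. -/
noncomputable def cartesianEdgeL {V : Type*} (G : SimpleGraph V) : ℕ :=
  sInf {l | ∃ f g : Fin l → V,
    IsLazySweep G f ∧ IsLazySweep G g ∧ IsOpposite G f g ∧ mDist G f g = cartesianEdgeSpan G}

open Finset Fin.CommRing

section Generic

variable {V : Type*} {G : SimpleGraph V} {l : ℕ} {f g : Fin l → V}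

lemma mDist_le_dist (i : Fin l) : mDist G f g ≤ G.dist (f i) (g i) :=
  Nat.sInf_le ⟨i, rfl⟩

lemma le_mDist {d : ℕ} (hl : 0 < l) (h : ∀ i, d ≤ G.dist (f i) (g i)) : d ≤ mDist G f g :=
  le_csInf ⟨_, ⟨⟨0, hl⟩, rfl⟩⟩ (by rintro _ ⟨i, rfl⟩; exact h i)

theorem IsOpposite.two_mul_card_edgeFinset_le [Fintype G.edgeSet] (hf : SweepCond G f)
    (hg : SweepCond G g) (hfg : IsOpposite G f g) : 2 * #G.edgeFinset ≤ l - 1 := by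
  classical
  let Moves (h : Fin l → V) : Finset (Fin (l - 1)) :=
    {i | G.Adj (h ⟨i, by omega⟩) (h ⟨i + 1, by omega⟩)}
  have card_le_moves {h : Fin l → V} (hh : SweepCond G h) : #G.edgeFinset ≤ #(Moves h) := by
    refine card_le_card_of_surjOn
      (fun i : Fin (l - 1) => s(h ⟨i, by omega⟩, h ⟨i + 1, by omega⟩)) fun e he => ?_
    obtain ⟨i, hi, rfl⟩ := hh e (mem_edgeFinset.mp he)
    exact ⟨⟨i, by omega⟩, by simpa [Moves] using he, rfl⟩
  have disjoint_moves : Disjoint (Moves f) (Moves g) := by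
    refine disjoint_filter.mpr fun i _ hfi hgi => hgi.ne ?_
    exact (hfg i _).mp hfi
  calc 2 * #G.edgeFinset ≤ #(Moves f) + #(Moves g) := by
        linarith [card_le_moves hf, card_le_moves hg]
    _ = #(Moves f ∪ Moves g) := (card_union_of_disjoint disjoint_moves).symm
    _ ≤ l - 1 := by simpa using card_le_univ (Moves f ∪ Moves g)

end Generic

namespace Fin

def cycleNorm {m : ℕ} (x : Fin m) : ℕ := min x.val (-x).val

variable {n : ℕ}

lemma cycleNorm_neg (x : Fin n) : cycleNorm (-x) = cycleNorm x := by
  rw [cycleNorm, cycleNorm, neg_neg, min_comm]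

lemma cycleNorm_eq (x : Fin (n + 2)) : cycleNorm x = min x.val (n + 2 - x.val) := by
  rw [cycleNorm, val_neg]
  split_ifs with h <;> simp [h]

lemma val_add_one_eq (x : Fin (n + 2)) : (x + 1).val = if x.val = n + 1 then 0 else x.val + 1 := by
  simp [val_add_one, Fin.ext_iff]

lemma cycleNorm_add_one_le (x : Fin (n + 2)) : cycleNorm (x + 1) ≤ cycleNorm x + 1 := by
  rw [cycleNorm_eq, cycleNorm_eq, val_add_one_eq]
  split_ifs <;> omega

lemma cycleNorm_sub_one_le (x : Fin (n + 2)) : cycleNorm (x - 1) ≤ cycleNorm x + 1 := by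
  rw [show x - 1 = -(-x + 1) by abel, cycleNorm_neg]
  simpa only [cycleNorm_neg] using cycleNorm_add_one_le (-x)

/-- `cycleNorm` exceeds `(n + 1) / 2` only at the antipode of `0`, which has no neighbour with
the same property. -/
lemma min_cycleNorm_add_one_le (x : Fin (n + 2)) :
    min (cycleNorm x) (cycleNorm (x + 1)) ≤ (n + 1) / 2 := by
  rw [cycleNorm_eq, cycleNorm_eq, val_add_one_eq]
  split_ifs <;> omega

end Fin

section Cycle

variable {n : ℕ}

lemma cycleGraph_adj_add_one (u : Fin (n + 2)) : (cycleGraph (n + 2)).Adj u (u + 1) :=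
  cycleGraph_adj.mpr (Or.inr (add_sub_cancel_left u 1))

lemma dist_cycleGraph_add_natCast_le (u : Fin (n + 2)) (k : ℕ) :
    (cycleGraph (n + 2)).dist u (u + k) ≤ k := by
  induction k with
  | zero => simp
  | succ k ih =>
    calc (cycleGraph (n + 2)).dist u (u + (k + 1 : ℕ))
        ≤ (cycleGraph (n + 2)).dist u (u + k) +
            (cycleGraph (n + 2)).dist (u + k) (u + k + 1) := by
          rw [Nat.cast_succ, ← add_assoc]; exact cycleGraph_connected.dist_triangle
      _ ≤ k + 1 := by
          rw [dist_eq_one_iff_adj.mpr (cycleGraph_adj_add_one _)]; omega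

lemma cycleNorm_sub_le_length {u v : Fin (n + 2)} (p : (cycleGraph (n + 2)).Walk u v) :
    (v - u).cycleNorm ≤ p.length := by
  induction p with
  | nil => simp [Fin.cycleNorm]
  | @cons u w v huw p ih =>
    rw [Walk.length_cons]
    rcases cycleGraph_adj.mp huw with h | h
    · rw [show v - u = v - w - 1 by rw [← h]; abel]
      exact (Fin.cycleNorm_sub_one_le _).trans (by omega)
    · rw [show v - u = v - w + 1 by rw [← h]; abel]
      exact (Fin.cycleNorm_add_one_le _).trans (by omega)

theorem dist_cycleGraph (u v : Fin (n + 2)) :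
    (cycleGraph (n + 2)).dist u v = (v - u).cycleNorm := by
  apply le_antisymm
  · apply le_min
    · simpa using dist_cycleGraph_add_natCast_le u (v - u).val
    · rw [dist_comm, neg_sub]
      simpa using dist_cycleGraph_add_natCast_le v (u - v).val
  · obtain ⟨p, hp⟩ := cycleGraph_connected.exists_walk_length_eq_dist u v
    exact hp ▸ cycleNorm_sub_le_length p

theorem card_edgeFinset_cycleGraph : #(cycleGraph (n + 3)).edgeFinset = n + 3 := by
  have := sum_degrees_eq_twice_card_edges (cycleGraph (n + 3))
  simp only [cycleGraph_degree_three_le, sum_const, card_univ, Fintype.card_fin,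
    smul_eq_mul] at this
  omega

theorem mDist_cycleGraph_le {l : ℕ} {f g : Fin l → Fin (n + 2)}
    (hf : SweepCond (cycleGraph (n + 2)) f) (hfg : IsOpposite (cycleGraph (n + 2)) f g) :
    mDist (cycleGraph (n + 2)) f g ≤ (n + 1) / 2 := by
  obtain ⟨i, hi, he⟩ := hf s(0, 1) (by simpa using cycleGraph_adj_add_one (0 : Fin (n + 2)))
  set a : Fin l := ⟨i, by omega⟩
  set b : Fin l := ⟨i + 1, hi⟩
  have hmove : (cycleGraph (n + 2)).Adj (f a) (f b) := by
    rw [← mem_edgeSet, ← he]; simpa using cycleGraph_adj_add_one (0 : Fin (n + 2))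
  have hstay : g a = g b := (hfg i hi).mp hmove
  have hstep : g b - f b = g a - f a + 1 ∨ g a - f a = g b - f b + 1 := by
    rcases cycleGraph_adj.mp hmove with h | h
    · left; rw [← h, ← hstay]; abel
    · right; rw [← h, ← hstay]; abel
  calc mDist _ f g ≤ min ((cycleGraph _).dist (f a) (g a)) ((cycleGraph _).dist (f b) (g b)) :=
        le_min (mDist_le_dist a) (mDist_le_dist b)
    _ ≤ (n + 1) / 2 := by
        rw [dist_cycleGraph, dist_cycleGraph]
        rcases hstep with h | h
        · rw [h]; exact Fin.min_cycleNorm_add_one_le _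
        · rw [h, min_comm]; exact Fin.min_cycleNorm_add_one_le _

end Cycle

section Stairs

variable {n l : ℕ}

lemma sweepCond_cycleGraph_of_forall_exists {f : Fin l → Fin (n + 2)}
    (h : ∀ u, ∃ i, ∃ hi : i + 1 < l, f ⟨i, by omega⟩ = u ∧ f ⟨i + 1, hi⟩ = u + 1) :
    SweepCond (cycleGraph (n + 2)) f := by
  intro e he
  induction e using Sym2.ind with
  | _ u v =>
    rcases (cycleGraph_adj.mp he : u - v = 1 ∨ v - u = 1) with huv | huv
    · obtain ⟨i, hi, hv, hu⟩ := h v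
      exact ⟨i, hi, by rw [hv, hu, ← huv, add_sub_cancel, Sym2.eq_swap]⟩
    · obtain ⟨i, hi, hu, hv⟩ := h u
      exact ⟨i, hi, by rw [hu, hv, ← huv, add_sub_cancel]⟩

variable (n) in
/-- Moves forward exactly at the steps `i → i + 1` with `i + s` odd. -/
def cycleStairs (c s : ℕ) (i : Fin l) : Fin (n + 2) := ((c + (i + s) / 2 : ℕ) : Fin (n + 2))

variable {c s : ℕ}

lemma cycleStairs_succ (i : ℕ) (hi : i + 1 < l) :
    cycleStairs n c s (⟨i + 1, hi⟩ : Fin l) =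
      cycleStairs n c s (⟨i, by omega⟩ : Fin l) + ((i + s) % 2 : ℕ) := by
  simp only [cycleStairs]
  rw [← Nat.cast_add, show c + (i + 1 + s) / 2 = c + (i + s) / 2 + (i + s) % 2 by omega]

lemma adj_cycleStairs_succ_iff (i : ℕ) (hi : i + 1 < l) :
    (cycleGraph (n + 2)).Adj (cycleStairs n c s (⟨i, by omega⟩ : Fin l))
      (cycleStairs n c s (⟨i + 1, hi⟩ : Fin l)) ↔ (i + s) % 2 = 1 := by
  rw [cycleStairs_succ]
  rcases Nat.mod_two_eq_zero_or_one (i + s) with h | h <;> simp [h, cycleGraph_adj_add_one]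

lemma cycleStairs_eq_succ_iff (i : ℕ) (hi : i + 1 < l) :
    cycleStairs n c s (⟨i, by omega⟩ : Fin l) = cycleStairs n c s (⟨i + 1, hi⟩ : Fin l) ↔
      (i + s) % 2 = 0 := by
  rw [cycleStairs_succ]
  rcases Nat.mod_two_eq_zero_or_one (i + s) with h | h
  · simp [h]
  · simp [h, (cycleGraph_adj_add_one _).ne]

lemma exists_cycleStairs_eq (hs : s ≤ 1) (hl : 2 * (n + 2) < l) (u : Fin (n + 2)) :
    ∃ i, ∃ hi : i + 1 < l, cycleStairs n c s (⟨i, by omega⟩ : Fin l) = u ∧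
      cycleStairs n c s (⟨i + 1, hi⟩ : Fin l) = u + 1 := by
  have hk := (u - c).isLt
  refine ⟨2 * (u - c).val + 1 - s, by omega, ?_, ?_⟩
  · simp only [cycleStairs]
    rw [show (2 * (u - c).val + 1 - s + s) / 2 = (u - c).val by omega]
    push_cast
    abel
  · simp only [cycleStairs]
    rw [show (2 * (u - c).val + 1 - s + 1 + s) / 2 = (u - c).val + 1 by omega]
    push_cast
    abel

lemma isLazySweep_cycleStairs (hs : s ≤ 1) (hl : 2 * (n + 2) < l) :
    IsLazySweep (cycleGraph (n + 2)) (cycleStairs n c s : Fin l → Fin (n + 2)) := by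
  refine ⟨⟨fun u => ?_, fun i hi => ?_⟩,
    sweepCond_cycleGraph_of_forall_exists (exists_cycleStairs_eq hs hl)⟩
  · obtain ⟨i, hi, hu, -⟩ := exists_cycleStairs_eq (c := c) hs hl u
    exact ⟨_, hu⟩
  · rw [adj_cycleStairs_succ_iff, cycleStairs_eq_succ_iff]
    omega

lemma isOpposite_cycleStairs :
    IsOpposite (cycleGraph (n + 2)) (cycleStairs n 0 1 : Fin l → Fin (n + 2))
      (cycleStairs n c 0) := by
  intro i hi
  rw [adj_cycleStairs_succ_iff, cycleStairs_eq_succ_iff]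
  omega

lemma le_dist_cycleStairs (i : Fin l) :
    (n + 1) / 2 ≤ (cycleGraph (n + 2)).dist (cycleStairs n 0 1 i)
      (cycleStairs n ((n + 1) / 2 + 1) 0 i) := by
  have hsub : cycleStairs n ((n + 1) / 2 + 1) 0 i - cycleStairs n 0 1 i =
      (((n + 1) / 2 + 1 - i % 2 : ℕ) : Fin (n + 2)) := by
    simp only [cycleStairs]
    rw [← Nat.cast_sub (by omega)]
    congr 1
    omega
  rw [dist_cycleGraph, hsub, Fin.cycleNorm_eq, Fin.val_natCast, Nat.mod_eq_of_lt (by omega)]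
  omega

end Stairs

section Span

variable {n : ℕ}

theorem exists_opposite_lazySweeps_cycleGraph {l : ℕ} (hl : 2 * (n + 2) < l) :
    ∃ f g : Fin l → Fin (n + 2), IsLazySweep (cycleGraph (n + 2)) f ∧
      IsLazySweep (cycleGraph (n + 2)) g ∧ IsOpposite (cycleGraph (n + 2)) f g ∧
      mDist (cycleGraph (n + 2)) f g = (n + 1) / 2 := by
  have hf := isLazySweep_cycleStairs (c := 0) le_rfl hl
  refine ⟨_, cycleStairs n ((n + 1) / 2 + 1) 0, hf, isLazySweep_cycleStairs zero_le_one hl,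
    isOpposite_cycleStairs, ?_⟩
  exact le_antisymm (mDist_cycleGraph_le hf.2 isOpposite_cycleStairs)
    (le_mDist (by omega) le_dist_cycleStairs)

theorem cartesianEdgeSpan_cycleGraph : cartesianEdgeSpan (cycleGraph (n + 2)) = (n + 1) / 2 := by
  refine IsGreatest.csSup_eq ⟨?_, ?_⟩
  · exact ⟨_, exists_opposite_lazySweeps_cycleGraph (Nat.lt_succ_self _)⟩
  · rintro _ ⟨l, f, g, hf, -, hfg, rfl⟩
    exact mDist_cycleGraph_le hf.2 hfg

end Span

theorem stmt17 (n : ℕ) (hn : 3 ≤ n) :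
    cartesianEdgeL (SimpleGraph.cycleGraph n) = 2 * n + 1 := by
  obtain ⟨n, rfl⟩ : ∃ m, n = m + 3 := ⟨n - 3, by omega⟩
  refine IsLeast.csInf_eq ⟨?_, ?_⟩
  · rw [cartesianEdgeSpan_cycleGraph]
    exact exists_opposite_lazySweeps_cycleGraph (by omega)
  · rintro l ⟨f, g, hf, hg, hfg, -⟩
    have := hfg.two_mul_card_edgeFinset_le hf.2 hg.2
    rw [card_edgeFinset_cycleGraph] at this
    omega
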